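/- Let (W,S) be a Coxeter system of finite rank, and fix a reduced visual tree decomposition of (W,S) such that every bag R_v is not separated by any complete subset of R_v and every edge set R_u ∩ R_v is complete. Then a subset T ⊆ S equals R_u ∩ R_v for some edge {u,v} of the decomposition if and only if T is a complete relative minimal separator of S. -/

import Mathlib

universe u

variable {W : Type u} [Group W]

/-- `S` is a set of Coxeter generators of `W`: `W` has the Coxeter presentation
`⟨S ∣ (st)^{m(s,t)} = 1⟩` whose simple reflections are the elements of `S`. -/
def IsCoxeterGeneratingSet (W : Type u) [Group W] (S : Set W) : Prop :=
  ∃ (M : CoxeterMatrix S) (cs : CoxeterSystem M W), ∀ s : S, cs.simple s = (s : W)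

/-- The presentation diagram of a Coxeter system, induced on the vertex set `A ⊆ W`:
distinct `s, t ∈ A` are adjacent exactly when `s * t` has finite order
(recall `orderOf x = 0` exactly when `x` has infinite order). -/
def presGraph (W : Type u) [Group W] (A : Set W) : SimpleGraph W where
  Adj s t := s ≠ t ∧ s ∈ A ∧ t ∈ A ∧ orderOf (s * t) ≠ 0
  symm := by
    constructor
    rintro s t ⟨h1, h2, h3, h4⟩
    refine ⟨h1.symm, h3, h2, ?_⟩
    have : SemiconjBy s (t * s) (s * t) := by unfold SemiconjBy; group
    rwa [this.orderOf_eq s]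
  loopless := by constructor; rintro s ⟨h, -⟩; exact h rfl

/-- `T` separates `R`: two elements of `R − T` lie in different connected components of the
induced subgraph of the presentation diagram on `R − T`. -/
def Separates (W : Type u) [Group W] (R T : Set W) : Prop :=
  ∃ a ∈ R \ T, ∃ b ∈ R \ T, ¬ (presGraph W (R \ T)).Reachable a b

/-- A subset `C` is complete if every product of two of its elements has finite order. -/
def IsCompleteSet (W : Type u) [Group W] (C : Set W) : Prop :=
  ∀ s ∈ C, ∀ t ∈ C, orderOf (s * t) ≠ 0

/-- `R` is separated by a complete subset of `R`. -/
def SeparatedByComplete (W : Type u) [Group W] (R : Set W) : Prop :=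
  ∃ T ⊆ R, IsCompleteSet W T ∧ Separates W R T

/-- `(S1, S0, S2)` is a separation of `S`. -/
def IsSeparation (W : Type u) [Group W] (S S1 S0 S2 : Set W) : Prop :=
  S1 ∪ S2 = S ∧ S1 ∩ S2 = S0 ∧ (S1 \ S0).Nonempty ∧ (S2 \ S0).Nonempty ∧
    ∀ a ∈ S1 \ S0, ∀ b ∈ S2 \ S0, orderOf (a * b) = 0

/-- `S0` is an `(a,b)`-separator of `S`: `a` and `b` lie in different connected components
of the induced subgraph of the presentation diagram on `S − S0`. -/
def IsABSeparator (W : Type u) [Group W] (S S0 : Set W) (a b : W) : Prop :=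
  a ∈ S \ S0 ∧ b ∈ S \ S0 ∧ ¬ (presGraph W (S \ S0)).Reachable a b

/-- `S0` is a relative minimal separator of `S`: a minimal `(a,b)`-separator of `S`
for some `a, b`. -/
def RelMinSeparator (W : Type u) [Group W] (S S0 : Set W) : Prop :=
  ∃ a b, IsABSeparator W S S0 a b ∧ ∀ T ⊂ S0, ¬ IsABSeparator W S T a b

/-- The set `wTw⁻¹`. -/
def conjSet (w : W) (T : Set W) : Set W := (fun x => w * x * w⁻¹) '' T

/-- `S0` is a c-minimal separator of `S`: `S0` separates `S` and no conjugate of a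
proper subset of `S0` that lies in `S` separates `S`. -/
def CMinSeparator (W : Type u) [Group W] (S S0 : Set W) : Prop :=
  Separates W S S0 ∧
    ¬ ∃ (w : W) (T : Set W), T ⊆ S0 ∧ T ≠ S0 ∧ conjSet w T ⊆ S ∧ Separates W S (conjSet w T)

/-- The union of the bags over the component of the tree `T` minus the edge `{u,v}`
containing `u`. -/
def edgeSide {W : Type u} [Group W] {V : Type} (T : SimpleGraph V) (bag : V → Set W)
    (u v : V) : Set W :=
  ⋃ w ∈ {w | (T.deleteEdges {s(u, v)}).Reachable u w}, bag w

/-- A visual tree decomposition of the Coxeter system `(W, S)`: a finite nonempty tree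
with bags `R_v ⊆ S` covering `S` such that for each edge `{u,v}`, the unions `A`, `B` of
bags over the two components of the tree minus the edge satisfy `A ∩ B = R_u ∩ R_v` and
`m(a,b) = ∞` for `a ∈ A − R_u ∩ R_v`, `b ∈ B − R_u ∩ R_v`.  This exhibits `W` as an
iterated visual amalgamated product of the groups `⟨R_v⟩` over the groups `⟨R_u ∩ R_v⟩`. -/
structure VisualTreeDecomp (W : Type u) [Group W] (S : Set W) where
  V : Type
  fintypeV : Fintype V
  T : SimpleGraph V
  isTree : T.IsTree
  bag : V → Set W
  bag_subset : ∀ v, bag v ⊆ S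
  bags_cover : (⋃ v, bag v) = S
  inter_eq : ∀ u v, T.Adj u v →
    edgeSide T bag u v ∩ edgeSide T bag v u = bag u ∩ bag v
  infinite_order : ∀ u v, T.Adj u v →
    ∀ a ∈ edgeSide T bag u v \ (bag u ∩ bag v),
      ∀ b ∈ edgeSide T bag v u \ (bag u ∩ bag v), orderOf (a * b) = 0

/-- A visual tree decomposition is reduced if each edge set is a proper subset of
the two incident bags. -/
def VisualTreeDecomp.Reduced {W : Type u} [Group W] {S : Set W}
    (D : VisualTreeDecomp W S) : Prop :=
  ∀ u v, D.T.Adj u v → D.bag u ∩ D.bag v ⊂ D.bag u ∧ D.bag u ∩ D.bag v ⊂ D.bag v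

/-- A group `G` has property FA if every action of `G` by graph automorphisms and
without inversions on a (nonempty) tree has a global fixed vertex. -/
def HasPropertyFA (G : Type u) [Group G] : Prop :=
  ∀ (V : Type u) (T : SimpleGraph V), T.IsTree →
    ∀ [MulAction G V],
      (∀ (g : G) (a b : V), T.Adj a b → T.Adj (g • a) (g • b)) →
      (¬ ∃ (g : G) (a b : V), T.Adj a b ∧ g • a = b ∧ g • b = a) →
      ∃ x : V, ∀ g : G, g • x = x

/-- The class 𝓕𝓐 of subgroups of `W`: those contained in a subgroup with property FA. -/
def MemFA {W : Type u} [Group W] (H : Subgroup W) : Prop :=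
  ∃ K : Subgroup W, H ≤ K ∧ HasPropertyFA K

/-- A chord of a closed walk: an edge of the graph between two vertices of the walk
that is not an edge of the walk. -/
def SimpleGraph.Walk.HasChord {V : Type*} {G : SimpleGraph V} {v : V} (c : G.Walk v v) : Prop :=
  ∃ a b, a ∈ c.support ∧ b ∈ c.support ∧ G.Adj a b ∧ s(a, b) ∉ c.edges

/-- A graph is chordal if every cycle of length at least four has a chord. -/
def SimpleGraph.IsChordalGraph {V : Type*} (G : SimpleGraph V) : Prop :=
  ∀ (v : V) (c : G.Walk v v), c.IsCycle → 4 ≤ c.length → c.HasChord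

/-- The set of all conjugates of elements of `S`. -/
def ConjugatesOf (W : Type u) [Group W] (S : Set W) : Set W :=
  {x | ∃ s ∈ S, ∃ w : W, x = w * s * w⁻¹}

/-- `S` is sharp-angled with respect to `S'`: every pair `s, t ∈ S` with `2 < m(s,t) < ∞`
is conjugate by a single element into `S'`. -/
def SharpAngled (W : Type u) [Group W] (S S' : Set W) : Prop :=
  ∀ s ∈ S, ∀ t ∈ S, 2 < orderOf (s * t) →
    ∃ w : W, w * s * w⁻¹ ∈ S' ∧ w * t * w⁻¹ ∈ S'

/-- `S''` is obtained from `S` by an elementary twist `(S1, ℓ, S2)`. -/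
def ElemTwist (W : Type u) [Group W] (S S'' : Set W) : Prop :=
  ∃ (S1 S2 : Set W) (ℓ : W), S1 ∪ S2 = S ∧
    (∀ a ∈ S1 \ (S1 ∩ S2), ∀ b ∈ S2 \ (S1 ∩ S2), orderOf (a * b) = 0) ∧
    ℓ ∈ Subgroup.closure (S1 ∩ S2) ∧ conjSet ℓ (S1 ∩ S2) = S1 ∩ S2 ∧
    S'' = S1 ∪ conjSet ℓ S2

/-- Two sets of Coxeter generators are twist equivalent if one is obtained from the
other by a finite sequence of elementary twists. -/
def TwistEquiv (W : Type u) [Group W] (S S' : Set W) : Prop :=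
  Relation.ReflTransGen (ElemTwist W) S S'

/-- `(W, S)` satisfies the twist conjecture: every set `S'` of Coxeter generators of `W`
consisting of conjugates of elements of `S`, with `S` sharp-angled with respect to `S'`,
is twist equivalent to `S`. -/
def SatisfiesTwistConjecture (W : Type u) [Group W] (S : Set W) : Prop :=
  ∀ S' : Set W, IsCoxeterGeneratingSet W S' → S' ⊆ ConjugatesOf W S →
    SharpAngled W S S' → TwistEquiv W S S'

/-!
An edge set `E = R_u ∩ R_v` separates the two sides of its edge, because a generator on one
side outside `E` has infinite order product with every generator on the other side outside `E`.
Reducedness provides `a ∈ R_u − E` and `b ∈ R_v − E`, so `E` is an `(a,b)`-separator. It is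
minimal: a proper subset `C` of `E` misses some `t ∈ E`, and `C` is complete, so it separates
neither bag, and `a` is joined to `t` inside `R_u − C` and `t` to `b` inside `R_v − C`.

Conversely, let `T` be a complete minimal `(a,b)`-separator. Each bag minus `T` is connected,
so along the tree path from a bag containing `a` to one containing `b` there is an edge `{w,z}`
such that the component of `a` in `S − T` meets `R_w − T` but not `R_z − T`. Then
`R_w ∩ R_z ⊆ T`, and `R_w ∩ R_z` already separates `a` from `b`, so minimality gives
`R_w ∩ R_z = T`.
-/

namespace SimpleGraph

variable {V : Type*} {G : SimpleGraph V}

lemma Connected.reachable_or_reachable_deleteEdges (hG : G.Connected) (u v w : V) :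
    (G.deleteEdges {s(u, v)}).Reachable u w ∨ (G.deleteEdges {s(u, v)}).Reachable v w := by
  have hw := (reachable_iff_reflTransGen u w).1 (hG.preconnected u w)
  induction hw with
  | refl => exact Or.inl .rfl
  | @tail y z _ hyz ih =>
    by_cases he : s(y, z) = s(u, v)
    · rcases Sym2.eq_iff.1 he with ⟨-, rfl⟩ | ⟨-, rfl⟩
      · exact Or.inr .rfl
      · exact Or.inl .rfl
    · have hadj : (G.deleteEdges {s(u, v)}).Adj y z := by simpa [he] using hyz
      exact ih.imp (·.trans hadj.reachable) (·.trans hadj.reachable)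

lemma Walk.IsPath.exists_adj_reachable_deleteEdges {u v : V} {p : G.Walk u v} (hp : p.IsPath)
    {X : Set V} (hu : u ∈ X) (hv : v ∉ X) :
    ∃ w z, G.Adj w z ∧ w ∈ X ∧ z ∉ X ∧ (G.deleteEdges {s(w, z)}).Reachable z v := by
  induction p with
  | nil => exact absurd hu hv
  | @cons u z v h q ih =>
    rw [Walk.cons_isPath_iff] at hp
    by_cases hz : z ∈ X
    · exact ih hp.1 hz hv
    · refine ⟨u, z, h, hu, hz, ⟨q.toDeleteEdges _ fun e he hes => ?_⟩⟩
      exact hp.2 (q.fst_mem_support_of_mem_edges (Set.mem_singleton_iff.1 hes ▸ he))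

end SimpleGraph

lemma presGraph_mono {X Y : Set W} (h : X ⊆ Y) : presGraph W X ≤ presGraph W Y :=
  fun _ _ ⟨hne, hs, ht, hord⟩ => ⟨hne, h hs, h ht, hord⟩

lemma mem_sdiff_of_presGraph_reachable {S A B : Set W} (hU : A ∪ B = S)
    (hinf : ∀ a ∈ A \ (A ∩ B), ∀ b ∈ B \ (A ∩ B), orderOf (a * b) = 0) {x y : W}
    (hxy : (presGraph W (S \ (A ∩ B))).Reachable x y) (hx : x ∈ A \ B) : y ∈ A \ B := by
  rw [SimpleGraph.reachable_iff_reflTransGen] at hxy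
  induction hxy with
  | refl => exact hx
  | @tail y z _ hyz ih =>
    obtain ⟨-, -, hzS, hord⟩ := hyz
    have hzAB : z ∈ A ∪ B := hU ▸ hzS.1
    by_cases hzA : z ∈ A
    · exact ⟨hzA, fun hzB => hzS.2 ⟨hzA, hzB⟩⟩
    · exact absurd (hinf y ⟨ih.1, fun h => ih.2 h.2⟩ z
        ⟨hzAB.resolve_left hzA, fun h => hzA h.1⟩) hord

lemma presGraph_reachable_of_not_separatedByComplete {R C : Set W}
    (hR : ¬ SeparatedByComplete W R) (hC : IsCompleteSet W C) {x y : W}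
    (hx : x ∈ R \ C) (hy : y ∈ R \ C) : (presGraph W (R \ C)).Reachable x y := by
  by_contra hxy
  refine hR ⟨C ∩ R, Set.inter_subset_right, fun s hs t ht => hC s hs.1 t ht.1, ?_⟩
  rw [Separates, Set.sdiff_inter_self_eq_sdiff]
  exact ⟨x, hx, y, hy, hxy⟩

lemma mem_edgeSide {V : Type} {T : SimpleGraph V} {bag : V → Set W} {u v w : V}
    (hw : (T.deleteEdges {s(u, v)}).Reachable u w) {x : W} (hx : x ∈ bag w) :
    x ∈ edgeSide T bag u v :=
  Set.mem_biUnion hw hx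

lemma bag_subset_edgeSide {V : Type} (T : SimpleGraph V) (bag : V → Set W) (u v : V) :
    bag u ⊆ edgeSide T bag u v :=
  fun _ => mem_edgeSide .rfl

namespace VisualTreeDecomp

variable {S : Set W} (D : VisualTreeDecomp W S)

lemma reachable_of_mem_bag {v : D.V} (hv : ¬ SeparatedByComplete W (D.bag v)) {C : Set W}
    (hC : IsCompleteSet W C) {x y : W} (hx : x ∈ D.bag v \ C) (hy : y ∈ D.bag v \ C) :
    (presGraph W (S \ C)).Reachable x y :=
  (presGraph_reachable_of_not_separatedByComplete hv hC hx hy).mono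
    (presGraph_mono (Set.sdiff_subset_sdiff_left (D.bag_subset v)))

lemma edgeSide_union_edgeSide (u v : D.V) :
    edgeSide D.T D.bag u v ∪ edgeSide D.T D.bag v u = S := by
  refine subset_antisymm (Set.union_subset ?_ ?_) fun x hx => ?_
  · exact Set.iUnion₂_subset fun w _ => D.bag_subset w
  · exact Set.iUnion₂_subset fun w _ => D.bag_subset w
  · rw [← D.bags_cover, Set.mem_iUnion] at hx
    obtain ⟨w, hxw⟩ := hx
    rcases D.isTree.connected.reachable_or_reachable_deleteEdges u v w with h | h
    · exact Or.inl (mem_edgeSide h hxw)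
    · exact Or.inr (mem_edgeSide (by rwa [Sym2.eq_swap]) hxw)

variable {D}

lemma notMem_edgeSide_swap {u v : D.V} (huv : D.T.Adj u v) {x : W}
    (hx : x ∈ edgeSide D.T D.bag u v) (hxE : x ∉ D.bag u ∩ D.bag v) :
    x ∉ edgeSide D.T D.bag v u :=
  fun h => hxE (D.inter_eq u v huv ▸ ⟨hx, h⟩)

lemma mem_edgeSide_of_reachable {u v : D.V} (huv : D.T.Adj u v) {x y : W}
    (hxy : (presGraph W (S \ (D.bag u ∩ D.bag v))).Reachable x y)
    (hx : x ∈ edgeSide D.T D.bag u v) (hxE : x ∉ D.bag u ∩ D.bag v) :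
    y ∈ edgeSide D.T D.bag u v ∧ y ∉ edgeSide D.T D.bag v u := by
  rw [← D.inter_eq u v huv] at hxy
  refine mem_sdiff_of_presGraph_reachable (D.edgeSide_union_edgeSide u v) ?_ hxy
    ⟨hx, notMem_edgeSide_swap huv hx hxE⟩
  rw [D.inter_eq u v huv]
  exact D.infinite_order u v huv

lemma isABSeparator_inter {u v : D.V} (huv : D.T.Adj u v) {a b : W}
    (ha : a ∈ edgeSide D.T D.bag u v) (haE : a ∉ D.bag u ∩ D.bag v)
    (hb : b ∈ edgeSide D.T D.bag v u) (hbE : b ∉ D.bag u ∩ D.bag v) :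
    IsABSeparator W S (D.bag u ∩ D.bag v) a b :=
  ⟨⟨D.edgeSide_union_edgeSide u v ▸ Or.inl ha, haE⟩,
    ⟨D.edgeSide_union_edgeSide u v ▸ Or.inr hb, hbE⟩,
    fun hab => (mem_edgeSide_of_reachable huv hab ha haE).2 hb⟩

lemma not_isABSeparator_of_ssubset_inter {u v : D.V}
    (hu : ¬ SeparatedByComplete W (D.bag u)) (hv : ¬ SeparatedByComplete W (D.bag v))
    (hE : IsCompleteSet W (D.bag u ∩ D.bag v)) {a b : W}
    (ha : a ∈ D.bag u \ (D.bag u ∩ D.bag v)) (hb : b ∈ D.bag v \ (D.bag u ∩ D.bag v))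
    {C : Set W} (hC : C ⊂ D.bag u ∩ D.bag v) : ¬ IsABSeparator W S C a b := by
  obtain ⟨t, ⟨htu, htv⟩, htC⟩ := Set.exists_of_ssubset hC
  have hCc : IsCompleteSet W C := fun s hs r hr => hE s (hC.subset hs) r (hC.subset hr)
  have hat := D.reachable_of_mem_bag hu hCc ⟨ha.1, fun h => ha.2 (hC.subset h)⟩ ⟨htu, htC⟩
  have htb := D.reachable_of_mem_bag hv hCc ⟨htv, htC⟩ ⟨hb.1, fun h => hb.2 (hC.subset h)⟩
  exact fun hsep => hsep.2.2 (hat.trans htb)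

lemma relMinSeparator_inter (hred : D.Reduced)
    (hbag : ∀ v, ¬ SeparatedByComplete W (D.bag v)) {u v : D.V} (huv : D.T.Adj u v)
    (hE : IsCompleteSet W (D.bag u ∩ D.bag v)) :
    RelMinSeparator W S (D.bag u ∩ D.bag v) := by
  obtain ⟨a, hau, haE⟩ := Set.exists_of_ssubset (hred u v huv).1
  obtain ⟨b, hbv, hbE⟩ := Set.exists_of_ssubset (hred u v huv).2
  exact ⟨a, b,
    isABSeparator_inter huv (bag_subset_edgeSide _ _ u v hau) haE
      (bag_subset_edgeSide _ _ v u hbv) hbE,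
    fun _ => not_isABSeparator_of_ssubset_inter (hbag u) (hbag v) hE ⟨hau, haE⟩
      ⟨hbv, hbE⟩⟩

lemma exists_inter_subset_isABSeparator (hbag : ∀ v, ¬ SeparatedByComplete W (D.bag v))
    {T : Set W} (hT : IsCompleteSet W T) {a b : W} (hab : IsABSeparator W S T a b) :
    ∃ u v, D.T.Adj u v ∧ D.bag u ∩ D.bag v ⊆ T ∧
      IsABSeparator W S (D.bag u ∩ D.bag v) a b := by
  classical
  obtain ⟨⟨haS, haT⟩, ⟨hbS, hbT⟩, hnr⟩ := hab
  obtain ⟨u₀, hau₀⟩ := Set.mem_iUnion.1 (D.bags_cover.ge haS)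
  obtain ⟨v₀, hbv₀⟩ := Set.mem_iUnion.1 (D.bags_cover.ge hbS)
  obtain ⟨p⟩ := D.isTree.connected.preconnected u₀ v₀
  let X := {w | ∃ x ∈ D.bag w \ T, (presGraph W (S \ T)).Reachable a x}
  have hu₀ : u₀ ∈ X := ⟨a, ⟨hau₀, haT⟩, .rfl⟩
  have hv₀ : v₀ ∉ X := fun ⟨x, hx, hax⟩ =>
    hnr (hax.trans (D.reachable_of_mem_bag (hbag v₀) hT hx ⟨hbv₀, hbT⟩))
  obtain ⟨w, z, hwz, ⟨x, hx, hax⟩, hz, hzv₀⟩ :=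
    p.bypass_isPath.exists_adj_reachable_deleteEdges hu₀ hv₀
  have hET : D.bag w ∩ D.bag z ⊆ T := fun y hy => by_contra fun hyT =>
    hz ⟨y, ⟨hy.2, hyT⟩, hax.trans (D.reachable_of_mem_bag (hbag w) hT hx ⟨hy.1, hyT⟩)⟩
  have hxa : (presGraph W (S \ (D.bag w ∩ D.bag z))).Reachable x a :=
    hax.symm.mono (presGraph_mono (Set.sdiff_subset_sdiff_right hET))
  have haw : a ∈ edgeSide D.T D.bag w z :=
    (mem_edgeSide_of_reachable hwz hxa (bag_subset_edgeSide _ _ w z hx.1) (hx.2 <| hET ·)).1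
  rw [Sym2.eq_swap] at hzv₀
  exact ⟨w, z, hwz, hET, isABSeparator_inter hwz haw (fun h => haT (hET h))
    (mem_edgeSide hzv₀ hbv₀) (fun h => hbT (hET h))⟩

end VisualTreeDecomp

theorem edge_iff_complete_rel_min_separator_general {W : Type u} [Group W] (S : Set W)
    (D : VisualTreeDecomp W S) (hred : D.Reduced)
    (hbag : ∀ v, ¬ SeparatedByComplete W (D.bag v))
    (hedge : ∀ u v, D.T.Adj u v → IsCompleteSet W (D.bag u ∩ D.bag v))
    (T : Set W) :
    (∃ u v, D.T.Adj u v ∧ D.bag u ∩ D.bag v = T) ↔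
      (IsCompleteSet W T ∧ RelMinSeparator W S T) := by
  constructor
  · rintro ⟨u, v, huv, rfl⟩
    exact ⟨hedge u v huv, D.relMinSeparator_inter hred hbag huv (hedge u v huv)⟩
  · rintro ⟨hT, a, b, hab, hmin⟩
    obtain ⟨u, v, huv, hET, hsep⟩ := D.exists_inter_subset_isABSeparator hbag hT hab
    exact ⟨u, v, huv, by_contra fun hne => hmin _ (hET.ssubset_of_ne hne) hsep⟩

/-- part of Theorem 2.5. Fix a reduced visual tree decomposition of a
finite rank Coxeter system `(W,S)` with no bag separated by a complete subset and all
edge sets complete.  Then a subset `T ⊆ S` is an edge set `R_u ∩ R_v` of the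
decomposition if and only if `T` is a complete relative minimal separator of `S`. -/
theorem edge_iff_complete_rel_min_separator {W : Type u} [Group W] (S : Set W)
    (hcox : IsCoxeterGeneratingSet W S) (hfin : S.Finite)
    (D : VisualTreeDecomp W S) (hred : D.Reduced)
    (hbag : ∀ v, ¬ SeparatedByComplete W (D.bag v))
    (hedge : ∀ u v, D.T.Adj u v → IsCompleteSet W (D.bag u ∩ D.bag v))
    (T : Set W) (hT : T ⊆ S) :
    (∃ u v, D.T.Adj u v ∧ D.bag u ∩ D.bag v = T) ↔
      (IsCompleteSet W T ∧ RelMinSeparator W S T) :=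
  edge_iff_complete_rel_min_separator_general S D hred hbag hedge T
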